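/- arXiv:2106.01546 — 2 statements merged into one kernel-verified Lean document; each statement's English description precedes it below -/
import Mathlib

section
/- Suppose L satisfies (L1)–(L3) and f : ℝⁿ → ℝ is Lipschitz with Lipschitz constant K. Fix T > 0 and set λ₁(T,K) = θ_T*(K+1) + c_T + θ̄_T(0), where θ_T*(s) = sup_{r≥0}{rs − θ_T(r)}. Then for any 0 ≤ t₁ < t₂ ≤ T and x₁, x₂ ∈ ℝⁿ: (1) the infimum T⁻_{t₁,t₂}f(x₂) = inf_{z∈ℝⁿ}{f(z) + A_{t₁,t₂}(z,x₂)} is attained, and every minimizer z satisfies |z − x₂| ≤ λ₁(T,K)(t₂ − t₁); (2) the supremum T⁺_{t₁,t₂}f(x₁) = sup_{y∈ℝⁿ}{f(y) − A_{t₁,t₂}(x₁,y)} is attained, and every maximizer y satisfies |y − x₁| ≤ λ₁(T,K)(t₂ − t₁). -/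
open MeasureTheory Set Filter Topology intervalIntegral
open scoped RealInnerProductSpace ENNReal NNReal

noncomputable section

/-- Euclidean space `ℝⁿ`. -/
abbrev Euc (n : ℕ) : Type := EuclideanSpace ℝ (Fin n)

/-- `ξ` is absolutely continuous on `[a, b]`: it has a density `g` integrable on `[a,b]`,
which recovers `ξ` by integration and is almost everywhere the derivative of `ξ`. -/
def IsACOn {n : ℕ} (ξ : ℝ → Euc n) (a b : ℝ) : Prop :=
  ∃ g : ℝ → Euc n, IntervalIntegrable g volume a b ∧
    (∀ τ ∈ Icc a b, ξ τ = ξ a + ∫ σ in a..τ, g σ) ∧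
    (∀ᵐ τ ∂volume, τ ∈ Icc a b → HasDerivAt ξ (g τ) τ)

/-- A function `θ : [0, ∞) → [0, ∞)` is superlinear. -/
def Superlinear (θ : ℝ → ℝ) : Prop :=
  Tendsto (fun r => θ r / r) atTop atTop

/-- Action of a curve `ξ` on `[a,b]` for a time-dependent Lagrangian `L`. -/
def curveAction {n : ℕ} (L : ℝ → Euc n → Euc n → ℝ) (a b : ℝ) (ξ : ℝ → Euc n) : ℝ :=
  ∫ τ in a..b, L τ (ξ τ) (deriv ξ τ)

/-- Admissible curve for the fundamental solution `A_{s,t}(x,y)`. -/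
def IsAdmissible {n : ℕ} (L : ℝ → Euc n → Euc n → ℝ) (s t : ℝ) (x y : Euc n)
    (ξ : ℝ → Euc n) : Prop :=
  IsACOn ξ s t ∧ IntervalIntegrable (fun τ => L τ (ξ τ) (deriv ξ τ)) volume s t ∧
    ξ s = x ∧ ξ t = y

/-- The fundamental solution `A_{s,t}(x,y)`. -/
def fundSol {n : ℕ} (L : ℝ → Euc n → Euc n → ℝ) (s t : ℝ) (x y : Euc n) : ℝ :=
  sInf {r | ∃ ξ : ℝ → Euc n, IsAdmissible L s t x y ξ ∧ r = curveAction L s t ξ}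

/-- `ξ` is a minimizer for `A_{s,t}(x,y)`. -/
def IsMinimizer {n : ℕ} (L : ℝ → Euc n → Euc n → ℝ) (s t : ℝ) (x y : Euc n)
    (ξ : ℝ → Euc n) : Prop :=
  IsAdmissible L s t x y ξ ∧ curveAction L s t ξ = fundSol L s t x y ∧
    ∀ ζ : ℝ → Euc n, IsAdmissible L s t x y ζ → curveAction L s t ξ ≤ curveAction L s t ζ

/-- `L_v`, the gradient of `L` in the velocity variable. -/
def Lv {n : ℕ} (L : ℝ → Euc n → Euc n → ℝ) (s : ℝ) (x v : Euc n) : Euc n :=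
  gradient (fun w => L s x w) v

/-- `L_x`, the gradient of `L` in the space variable. -/
def Lx {n : ℕ} (L : ℝ → Euc n → Euc n → ℝ) (s : ℝ) (x v : Euc n) : Euc n :=
  gradient (fun y => L s y v) x

/-- The Hamiltonian associated with `L`: `H(s,x,p) = sup_v (⟨p,v⟩ - L(s,x,v))`. -/
def Ham {n : ℕ} (L : ℝ → Euc n → Euc n → ℝ) (s : ℝ) (x p : Euc n) : ℝ :=
  sSup {r | ∃ v : Euc n, r = ⟪p, v⟫ - L s x v}

/-- `H_p`, the gradient of the Hamiltonian in the momentum variable. -/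
def Hp {n : ℕ} (L : ℝ → Euc n → Euc n → ℝ) (s : ℝ) (x p : Euc n) : Euc n :=
  gradient (fun q => Ham L s x q) p

/-- `H_x`, the gradient of the Hamiltonian in the space variable. -/
def Hx {n : ℕ} (L : ℝ → Euc n → Euc n → ℝ) (s : ℝ) (x p : Euc n) : Euc n :=
  gradient (fun y => Ham L s y p) x

/-- (L1): `L_vv(s,x,v)` is positive definite. -/
def CondL1 {n : ℕ} (L : ℝ → Euc n → Euc n → ℝ) : Prop :=
  ∀ s : ℝ, 0 ≤ s → ∀ x v w : Euc n, w ≠ 0 →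
    0 < ⟪(fderiv ℝ (fun v' => Lv L s x v') v) w, w⟫

/-- (L2): uniform superlinear bounds on compact time intervals. -/
def CondL2 {n : ℕ} (L : ℝ → Euc n → Euc n → ℝ) : Prop :=
  ∀ T : ℝ, 0 < T → ∃ c : ℝ, 0 < c ∧ ∃ θbar θ : ℝ → ℝ,
    Monotone θbar ∧ Monotone θ ∧ (∀ r : ℝ, 0 ≤ r → 0 ≤ θbar r ∧ 0 ≤ θ r) ∧
    Superlinear θbar ∧ Superlinear θ ∧
    ∀ s ∈ Icc (0:ℝ) T, ∀ x v : Euc n, θ ‖v‖ - c ≤ L s x v ∧ L s x v ≤ θbar ‖v‖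

/-- (L3): bound on the time derivative of `L`. -/
def CondL3 {n : ℕ} (L : ℝ → Euc n → Euc n → ℝ) : Prop :=
  ∃ C1 C2 : ℝ → ℝ, (∀ t : ℝ, 0 ≤ t → 0 ≤ C1 t ∧ 0 ≤ C2 t) ∧
    (∀ K : Set ℝ, IsCompact K → BddAbove (C1 '' K) ∧ BddAbove (C2 '' K)) ∧
    ∀ T : ℝ, 0 < T → ∀ s ∈ Icc (0:ℝ) T, ∀ x v : Euc n,
      |deriv (fun σ => L σ x v) s| ≤ C1 T + C2 T * L s x v

/-- `L` is `C²` on `[0,∞)×ℝⁿ×ℝⁿ` and satisfies (L1)–(L3). -/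
def TonelliTD {n : ℕ} (L : ℝ → Euc n → Euc n → ℝ) : Prop :=
  ContDiffOn ℝ 2 (fun q : ℝ × Euc n × Euc n => L q.1 q.2.1 q.2.2)
      (Ici (0:ℝ) ×ˢ (univ : Set (Euc n × Euc n))) ∧
    CondL1 L ∧ CondL2 L ∧ CondL3 L

/-- Convex conjugate `θ*(s) = sup_{r ≥ 0} (r·s − θ(r))`. -/
def conjFn (θ : ℝ → ℝ) (s : ℝ) : ℝ :=
  sSup {r | ∃ v : ℝ, 0 ≤ v ∧ r = v * s - θ v}

/-!
The lower bound in (L2) gives `θ r ≥ (K + 1) r - θ*(K + 1)`, so every curve from `z` to `y`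
costs at least `(K + 1)|y - z| - (θ*(K + 1) + c)(t₂ - t₁)`, while the constant curve at `y`
costs at most `θ̄(0)(t₂ - t₁)`. Comparing a minimizer `z` with `y` and using that `f` is
`K`-Lipschitz, the surplus slope `1` yields `|z - y| ≤ λ₁ (t₂ - t₁)`.

Existence does not need lower semicontinuity of `A`. The starting points of near-minimizing
curves are bounded, so they cluster at some `z`. Replacing a near-minimizing curve on its first
`ε` units of time by a constant piece shows that it moves only `O(ε)` in that time; replacing that
piece instead by a segment from `z` then costs only `O(ε)` more. Hence the value at `z` lies
within `O(ε)` of the infimum for every `ε`.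

The maximization problem is the minimization problem for `-f` and the time-reversed Lagrangian
`L (t₁ + t₂ - s) x (-v)`.
-/

variable {n : ℕ}

section Curves

def concatCurve {E : Type*} (c : ℝ) (ξ η : ℝ → E) : ℝ → E :=
  fun τ => if τ ≤ c then ξ τ else η τ

variable {E : Type*} {c τ : ℝ} {ξ η : ℝ → E}

theorem concatCurve_of_le (h : τ ≤ c) : concatCurve c ξ η τ = ξ τ := if_pos h

theorem concatCurve_of_lt (h : c < τ) : concatCurve c ξ η τ = η τ := if_neg h.not_ge

theorem concatCurve_eventuallyEq_left (h : τ < c) : concatCurve c ξ η =ᶠ[𝓝 τ] ξ :=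
  eventually_of_mem (Iio_mem_nhds h) fun _ hσ => concatCurve_of_le (le_of_lt hσ)

theorem concatCurve_eventuallyEq_right (h : c < τ) : concatCurve c ξ η =ᶠ[𝓝 τ] η :=
  eventually_of_mem (Ioi_mem_nhds h) fun _ hσ => concatCurve_of_lt hσ

end Curves

section AbsolutelyContinuous

variable {a b c : ℝ} {ξ η g : ℝ → Euc n}

theorem sub_eq_integral_of_eq_add_integral (hg : IntervalIntegrable g volume a b)
    (hξ : ∀ τ ∈ Icc a b, ξ τ = ξ a + ∫ σ in a..τ, g σ) {α β : ℝ} (hα : α ∈ Icc a b)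
    (hβ : β ∈ Icc a b) : ξ β - ξ α = ∫ σ in α..β, g σ := by
  rw [hξ β hβ, hξ α hα, add_sub_add_left_eq_sub, intervalIntegral.integral_interval_sub_left
    (hg.mono_set (uIcc_subset_uIcc left_mem_uIcc (Icc_subset_uIcc hβ)))
    (hg.mono_set (uIcc_subset_uIcc left_mem_uIcc (Icc_subset_uIcc hα)))]

theorem IsACOn.mono (h : IsACOn ξ a b) {a' b' : ℝ} (ha' : a' ∈ Icc a b) (hb' : b' ∈ Icc a b) :
    IsACOn ξ a' b' := by
  obtain ⟨g, hg, hξg, hgd⟩ := h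
  have hsub : Icc a' b' ⊆ Icc a b := Icc_subset_Icc ha'.1 hb'.2
  refine ⟨g, hg.mono_set (uIcc_subset_uIcc (Icc_subset_uIcc ha') (Icc_subset_uIcc hb')),
    fun τ hτ => ?_, hgd.mono fun τ hτd hτ => hτd (hsub hτ)⟩
  rw [← sub_eq_integral_of_eq_add_integral hg hξg ha' (hsub hτ), add_sub_cancel]

theorem IsACOn.concat (hξ : IsACOn ξ a c) (hη : IsACOn η c b) (hc : ξ c = η c)
    (hac : a ≤ c) (hcb : c ≤ b) : IsACOn (concatCurve c ξ η) a b := by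
  obtain ⟨g, hg, hξg, hgd⟩ := hξ
  obtain ⟨h, hh, hηh, hhd⟩ := hη
  have hint_left : IntervalIntegrable (concatCurve c g h) volume a c :=
    hg.congr fun τ hτ => (concatCurve_of_le (uIoc_of_le hac ▸ hτ).2).symm
  have hint_right : IntervalIntegrable (concatCurve c g h) volume c b :=
    hh.congr fun τ hτ => (concatCurve_of_lt (uIoc_of_le hcb ▸ hτ).1).symm
  refine ⟨concatCurve c g h, hint_left.trans hint_right, fun τ hτ => ?_, ?_⟩
  · rw [concatCurve_of_le hac]
    rcases le_or_gt τ c with hτc | hτc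
    · rw [concatCurve_of_le hτc, hξg τ ⟨hτ.1, hτc⟩]
      congr 1
      refine intervalIntegral.integral_congr fun σ hσ => ?_
      exact (concatCurve_of_le ((uIcc_of_le hτ.1 ▸ hσ).2.trans hτc)).symm
    · have hright : (∫ σ in c..τ, concatCurve c g h σ) = ∫ σ in c..τ, h σ :=
        intervalIntegral.integral_congr_ae <| Eventually.of_forall fun σ hσ =>
          concatCurve_of_lt (uIoc_of_le hτc.le ▸ hσ).1
      have hleft : (∫ σ in a..c, concatCurve c g h σ) = ∫ σ in a..c, g σ :=
        intervalIntegral.integral_congr fun σ hσ => concatCurve_of_le (uIcc_of_le hac ▸ hσ).2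
      rw [concatCurve_of_lt hτc, hηh τ ⟨hτc.le, hτ.2⟩,
        ← intervalIntegral.integral_add_adjacent_intervals hint_left
          (hint_right.mono_set (uIcc_subset_uIcc left_mem_uIcc (Icc_subset_uIcc ⟨hτc.le, hτ.2⟩))),
        hleft, hright, ← hc, hξg c ⟨hac, le_rfl⟩, add_assoc]
  · filter_upwards [hgd, hhd, Measure.ae_ne volume c] with τ hτg hτh hτc hτ
    rcases hτc.lt_or_gt with hτc | hτc
    · rw [concatCurve_of_le hτc.le]
      exact (hτg ⟨hτ.1, hτc.le⟩).congr_of_eventuallyEq (concatCurve_eventuallyEq_left hτc)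
    · rw [concatCurve_of_lt hτc]
      exact (hτh ⟨hτc.le, hτ.2⟩).congr_of_eventuallyEq (concatCurve_eventuallyEq_right hτc)

end AbsolutelyContinuous

section Admissible

variable {L : ℝ → Euc n → Euc n → ℝ} {a b c : ℝ} {x y p : Euc n} {ξ η : ℝ → Euc n}

theorem IsAdmissible.mono (h : IsAdmissible L a b x y ξ) {a' b' : ℝ} (ha' : a' ∈ Icc a b)
    (hb' : b' ∈ Icc a b) : IsAdmissible L a' b' (ξ a') (ξ b') ξ :=
  ⟨h.1.mono ha' hb',
    h.2.1.mono_set (uIcc_subset_uIcc (Icc_subset_uIcc ha') (Icc_subset_uIcc hb')), rfl, rfl⟩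

theorem IsAdmissible.curveAction_add (h : IsAdmissible L a b x y ξ) (hc : c ∈ Icc a b) :
    curveAction L a c ξ + curveAction L c b ξ = curveAction L a b ξ :=
  intervalIntegral.integral_add_adjacent_intervals
    (h.2.1.mono_set (uIcc_subset_uIcc left_mem_uIcc (Icc_subset_uIcc hc)))
    (h.2.1.mono_set (uIcc_subset_uIcc (Icc_subset_uIcc hc) right_mem_uIcc))

theorem IsAdmissible.concat (hξ : IsAdmissible L a c x p ξ) (hη : IsAdmissible L c b p y η)
    (hac : a ≤ c) (hcb : c ≤ b) :
    IsAdmissible L a b x y (concatCurve c ξ η) ∧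
      curveAction L a b (concatCurve c ξ η) = curveAction L a c ξ + curveAction L c b η := by
  obtain ⟨hξac, hξi, hξa, hξc⟩ := hξ
  obtain ⟨hηac, hηi, hηc, hηb⟩ := hη
  set F := fun τ => L τ (concatCurve c ξ η τ) (deriv (concatCurve c ξ η) τ)
  have hleft : ∀ᵐ τ, τ ∈ uIoc a c → L τ (ξ τ) (deriv ξ τ) = F τ := by
    filter_upwards [Measure.ae_ne volume c] with τ hτc hτ
    have hτc : τ < c := lt_of_le_of_ne (uIoc_of_le hac ▸ hτ).2 hτc
    simp only [F, concatCurve_of_le hτc.le, (concatCurve_eventuallyEq_left hτc).deriv_eq]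
  have hright : ∀ τ ∈ uIoc c b, L τ (η τ) (deriv η τ) = F τ := fun τ hτ => by
    have hτc : c < τ := (uIoc_of_le hcb ▸ hτ).1
    simp only [F, concatCurve_of_lt hτc, (concatCurve_eventuallyEq_right hτc).deriv_eq]
  have hFl : IntervalIntegrable F volume a c :=
    hξi.congr_ae ((ae_restrict_iff' measurableSet_uIoc).2 hleft)
  have hFr : IntervalIntegrable F volume c b := hηi.congr hright
  refine ⟨⟨hξac.concat hηac (hξc.trans hηc.symm) hac hcb, hFl.trans hFr,
    by rw [concatCurve_of_le hac, hξa], ?_⟩, ?_⟩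
  · rcases hcb.eq_or_lt with rfl | hcb
    · rw [concatCurve_of_le le_rfl, hξc, ← hηc, hηb]
    · rw [concatCurve_of_lt hcb, hηb]
  · rw [curveAction, ← intervalIntegral.integral_add_adjacent_intervals hFl hFr, curveAction,
      curveAction, intervalIntegral.integral_congr_ae hleft,
      intervalIntegral.integral_congr_ae (Eventually.of_forall hright)]

end Admissible

section TimeReversal

def timeReversal (a b : ℝ) (L : ℝ → Euc n → Euc n → ℝ) : ℝ → Euc n → Euc n → ℝ :=
  fun s x v => L (a + b - s) x (-v)

variable {L : ℝ → Euc n → Euc n → ℝ} {a b : ℝ} {x y : Euc n} {ξ : ℝ → Euc n}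

theorem timeReversal_timeReversal : timeReversal a b (timeReversal a b L) = L := by
  ext s x v
  simp [timeReversal]

theorem add_sub_mem_Icc {s : ℝ} (hs : s ∈ Icc a b) : a + b - s ∈ Icc a b :=
  ⟨by linarith [hs.2], by linarith [hs.1]⟩

theorem IsACOn.comp_add_sub (h : IsACOn ξ a b) (hab : a ≤ b) :
    IsACOn (fun τ => ξ (a + b - τ)) a b := by
  obtain ⟨g, hg, hξg, hgd⟩ := h
  refine ⟨fun τ => -g (a + b - τ), ?_, fun τ hτ => ?_, ?_⟩
  · exact (by simpa using (hg.comp_sub_left (a + b)).symm :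
      IntervalIntegrable (fun τ => g (a + b - τ)) volume a b).neg
  · have hsub :=
      sub_eq_integral_of_eq_add_integral hg hξg (add_sub_mem_Icc hτ) (right_mem_Icc.2 hab)
    rw [intervalIntegral.integral_neg, intervalIntegral.integral_comp_sub_left, add_sub_cancel_left,
      ← hsub]
    simp
  · filter_upwards [(quasiMeasurePreserving_sub_left_of_right_invariant volume (a + b)).ae hgd]
      with τ hτ hτab
    exact (hτ (add_sub_mem_Icc hτab)).comp_const_sub (a + b) τ

theorem IsAdmissible.timeReversal (h : IsAdmissible L a b x y ξ) (hab : a ≤ b) :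
    IsAdmissible (timeReversal a b L) a b y x (fun τ => ξ (a + b - τ)) ∧
      curveAction (timeReversal a b L) a b (fun τ => ξ (a + b - τ)) = curveAction L a b ξ := by
  obtain ⟨hξ, hi, rfl, rfl⟩ := h
  have hF : (fun τ => timeReversal a b L τ (ξ (a + b - τ)) (deriv (fun τ => ξ (a + b - τ)) τ)) =
      fun τ => L (a + b - τ) (ξ (a + b - τ)) (deriv ξ (a + b - τ)) := by
    ext τ
    simp [timeReversal, deriv_comp_const_sub]
  refine ⟨⟨hξ.comp_add_sub hab, ?_, by simp, by simp⟩, ?_⟩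
  · rw [hF]
    simpa using (hi.comp_sub_left (a + b)).symm
  · rw [curveAction, hF, intervalIntegral.integral_comp_sub_left (fun τ => L τ (ξ τ) (deriv ξ τ))]
    simp [curveAction]

theorem fundSol_timeReversal (hab : a ≤ b) :
    fundSol (timeReversal a b L) a b y x = fundSol L a b x y := by
  refine congrArg sInf (Set.ext fun r => ⟨?_, ?_⟩)
  · rintro ⟨η, hη, rfl⟩
    obtain ⟨hη', hact⟩ := hη.timeReversal hab
    rw [timeReversal_timeReversal] at hη' hact
    exact ⟨_, hη', hact.symm⟩
  · rintro ⟨ξ, hξ, rfl⟩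
    exact ⟨_, (hξ.timeReversal hab).1, (hξ.timeReversal hab).2.symm⟩

end TimeReversal

section ActionBounds

variable {L : ℝ → Euc n → Euc n → ℝ} {a b c μ : ℝ} {θ θbar : ℝ → ℝ} {x y : Euc n}
  {ξ : ℝ → Euc n}

theorem le_conjFn (hθ : Monotone θ) (hθsl : Superlinear θ) (hμ : 0 ≤ μ) {r : ℝ} (hr : 0 ≤ r) :
    r * μ - θ r ≤ conjFn θ μ := by
  obtain ⟨R, hR⟩ := (hθsl.eventually_ge_atTop μ).exists_forall_of_atTop
  refine le_csSup ⟨max (max R 1 * μ - θ 0) 0, ?_⟩ ⟨r, hr, rfl⟩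
  rintro _ ⟨v, hv, rfl⟩
  rcases le_or_gt v (max R 1) with hvR | hvR
  · have := hθ hv
    have := mul_le_mul_of_nonneg_right hvR hμ
    exact le_max_of_le_left (by linarith)
  · have hv0 : 0 < v := one_pos.trans_le ((le_max_right R 1).trans hvR.le)
    have := (le_div_iff₀ hv0).1 (hR v ((le_max_left R 1).trans hvR.le))
    exact le_max_of_le_right (by linarith)

theorem IsAdmissible.curveAction_ge (h : IsAdmissible L a b x y ξ) (hab : a ≤ b)
    (hθ : Monotone θ) (hθsl : Superlinear θ)
    (hlow : ∀ s ∈ Icc a b, ∀ x v : Euc n, θ ‖v‖ - c ≤ L s x v) (hμ : 0 ≤ μ) :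
    μ * ‖y - x‖ - (conjFn θ μ + c) * (b - a) ≤ curveAction L a b ξ := by
  obtain ⟨⟨g, hg, hξg, hgd⟩, hi, rfl, rfl⟩ := h
  have hdisp : ‖ξ b - ξ a‖ ≤ ∫ τ in a..b, ‖g τ‖ := by
    rw [hξg b (right_mem_Icc.2 hab), add_sub_cancel_left]
    exact intervalIntegral.norm_integral_le_integral_norm hab
  have hpt : ∀ᵐ τ ∂volume.restrict (Icc a b),
      μ * ‖g τ‖ - (conjFn θ μ + c) ≤ L τ (ξ τ) (deriv ξ τ) := by
    rw [ae_restrict_iff' measurableSet_Icc]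
    filter_upwards [hgd] with τ hτd hτ
    rw [(hτd hτ).deriv]
    linarith [le_conjFn hθ hθsl hμ (norm_nonneg (g τ)), hlow τ hτ (ξ τ) (g τ)]
  have hint := intervalIntegral.integral_mono_ae_restrict hab
    ((hg.norm.const_mul μ).sub intervalIntegrable_const) hi hpt
  rw [intervalIntegral.integral_sub (hg.norm.const_mul μ) intervalIntegrable_const,
    intervalIntegral.integral_const_mul, intervalIntegral.integral_const, smul_eq_mul] at hint
  rw [curveAction]
  nlinarith [mul_le_mul_of_nonneg_left hdisp hμ]

theorem exists_isAdmissible_curveAction_le (hab : a < b)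
    (hLc : ContinuousOn (fun q : ℝ × Euc n × Euc n => L q.1 q.2.1 q.2.2) (Icc a b ×ˢ univ))
    (hup : ∀ s ∈ Icc a b, ∀ x v : Euc n, L s x v ≤ θbar ‖v‖) (x y : Euc n) :
    ∃ ξ, IsAdmissible L a b x y ξ ∧ curveAction L a b ξ ≤ θbar (‖y - x‖ / (b - a)) * (b - a) := by
  set v : Euc n := (b - a)⁻¹ • (y - x)
  have hd : ∀ τ, HasDerivAt (fun τ => x + (τ - a) • v) v τ := fun τ => by
    simpa using (((hasDerivAt_id τ).sub_const a).smul_const v).const_add x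
  have hcont : ContinuousOn (fun τ => L τ (x + (τ - a) • v) v) (Icc a b) :=
    hLc.comp (f := fun τ => (τ, x + (τ - a) • v, v)) (by fun_prop) fun τ hτ => ⟨hτ, mem_univ _⟩
  have hF : (fun τ => L τ (x + (τ - a) • v) (deriv (fun τ => x + (τ - a) • v) τ)) =
      fun τ => L τ (x + (τ - a) • v) v := funext fun τ => by rw [(hd τ).deriv]
  have hv : ‖v‖ = ‖y - x‖ / (b - a) := by
    rw [norm_smul, norm_inv, Real.norm_of_nonneg (sub_pos.2 hab).le, inv_mul_eq_div]
  refine ⟨fun τ => x + (τ - a) • v, ⟨⟨fun _ => v, intervalIntegrable_const, fun τ _ => by simp,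
    .of_forall fun τ _ => hd τ⟩, ?_, by simp, ?_⟩, ?_⟩
  · rw [hF]
    exact hcont.intervalIntegrable_of_Icc hab.le
  · simp [v, smul_inv_smul₀ (sub_pos.2 hab).ne']
  · rw [curveAction, hF, ← hv]
    calc (∫ τ in a..b, L τ (x + (τ - a) • v) v) ≤ ∫ _ in a..b, θbar ‖v‖ :=
          intervalIntegral.integral_mono_on hab.le (hcont.intervalIntegrable_of_Icc hab.le)
            intervalIntegrable_const fun τ hτ => hup τ hτ _ _
      _ = θbar ‖v‖ * (b - a) := by simp [mul_comm]

end ActionBounds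

section FundamentalSolution

/-- Continuity of `L` and the bounds of (L2), on the time interval `[a, b]`. -/
structure LagrangianBounds (L : ℝ → Euc n → Euc n → ℝ) (a b c : ℝ) (θ θbar : ℝ → ℝ) : Prop where
  continuousOn : ContinuousOn (fun q : ℝ × Euc n × Euc n => L q.1 q.2.1 q.2.2) (Icc a b ×ˢ univ)
  monotone : Monotone θ
  superlinear : Superlinear θ
  lower : ∀ s ∈ Icc a b, ∀ x v : Euc n, θ ‖v‖ - c ≤ L s x v
  upper : ∀ s ∈ Icc a b, ∀ x v : Euc n, L s x v ≤ θbar ‖v‖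

variable {L : ℝ → Euc n → Euc n → ℝ} {a b c μ : ℝ} {θ θbar : ℝ → ℝ} {x y : Euc n}
  {ξ : ℝ → Euc n}

theorem LagrangianBounds.mono (hL : LagrangianBounds L a b c θ θbar) {a' b' : ℝ}
    (ha' : a' ∈ Icc a b) (hb' : b' ∈ Icc a b) : LagrangianBounds L a' b' c θ θbar :=
  have hsub : Icc a' b' ⊆ Icc a b := Icc_subset_Icc ha'.1 hb'.2
  ⟨hL.continuousOn.mono (prod_mono hsub subset_rfl), hL.monotone, hL.superlinear,
    fun s hs => hL.lower s (hsub hs), fun s hs => hL.upper s (hsub hs)⟩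

theorem LagrangianBounds.timeReversal (hL : LagrangianBounds L a b c θ θbar) :
    LagrangianBounds (timeReversal a b L) a b c θ θbar where
  continuousOn := hL.continuousOn.comp
    (f := fun q : ℝ × Euc n × Euc n => (a + b - q.1, q.2.1, -q.2.2))
    (by fun_prop) fun _ hq => ⟨add_sub_mem_Icc (mem_prod.1 hq).1, mem_univ _⟩
  monotone := hL.monotone
  superlinear := hL.superlinear
  lower s hs x v := by simpa [_root_.timeReversal] using hL.lower _ (add_sub_mem_Icc hs) x (-v)
  upper s hs x v := by simpa [_root_.timeReversal] using hL.upper _ (add_sub_mem_Icc hs) x (-v)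

theorem bddBelow_curveActions (hL : LagrangianBounds L a b c θ θbar) (hab : a ≤ b) :
    BddBelow {r | ∃ ξ, IsAdmissible L a b x y ξ ∧ r = curveAction L a b ξ} := by
  refine ⟨-((conjFn θ 0 + c) * (b - a)), ?_⟩
  rintro _ ⟨ξ, hξ, rfl⟩
  simpa using hξ.curveAction_ge hab hL.monotone hL.superlinear hL.lower le_rfl

theorem fundSol_le_curveAction (hL : LagrangianBounds L a b c θ θbar) (hab : a ≤ b)
    (hξ : IsAdmissible L a b x y ξ) : fundSol L a b x y ≤ curveAction L a b ξ :=
  csInf_le (bddBelow_curveActions hL hab) ⟨ξ, hξ, rfl⟩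

theorem fundSol_le (hL : LagrangianBounds L a b c θ θbar) (hab : a < b) (x y : Euc n) :
    fundSol L a b x y ≤ θbar (‖y - x‖ / (b - a)) * (b - a) :=
  have ⟨_, hξ, hact⟩ := exists_isAdmissible_curveAction_le hab hL.continuousOn hL.upper x y
  (fundSol_le_curveAction hL hab.le hξ).trans hact

theorem le_fundSol (hL : LagrangianBounds L a b c θ θbar) (hab : a < b) (hμ : 0 ≤ μ)
    (x y : Euc n) : μ * ‖y - x‖ - (conjFn θ μ + c) * (b - a) ≤ fundSol L a b x y := by
  obtain ⟨ξ, hξ, -⟩ := exists_isAdmissible_curveAction_le hab hL.continuousOn hL.upper x y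
  refine le_csInf ⟨_, ξ, hξ, rfl⟩ ?_
  rintro _ ⟨η, hη, rfl⟩
  exact hη.curveAction_ge hab.le hL.monotone hL.superlinear hL.lower hμ

theorem exists_curveAction_lt (hL : LagrangianBounds L a b c θ θbar) (hab : a < b)
    (x y : Euc n) {e : ℝ} (he : 0 < e) :
    ∃ ξ, IsAdmissible L a b x y ξ ∧ curveAction L a b ξ < fundSol L a b x y + e := by
  obtain ⟨ξ, hξ, -⟩ := exists_isAdmissible_curveAction_le hab hL.continuousOn hL.upper x y
  obtain ⟨_, ⟨η, hη, rfl⟩, hlt⟩ := Real.lt_sInf_add_pos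
    (s := {r | ∃ ξ, IsAdmissible L a b x y ξ ∧ r = curveAction L a b ξ}) ⟨_, ξ, hξ, rfl⟩ he
  exact ⟨η, hη, hlt⟩

/-- Replacing `ξ` on `[a, σ]` by a segment from `z` to `ξ σ` bounds the action from `z`. -/
theorem fundSol_le_splice (hL : LagrangianBounds L a b c θ θbar) (hξ : IsAdmissible L a b x y ξ)
    {σ : ℝ} (hσ : σ ∈ Ioc a b) (z : Euc n) :
    fundSol L a b z y ≤ θbar (‖ξ σ - z‖ / (σ - a)) * (σ - a) + curveAction L σ b ξ := by
  have hab : a ≤ b := hσ.1.le.trans hσ.2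
  have hσ' : σ ∈ Icc a b := Ioc_subset_Icc_self hσ
  have hLσ := hL.mono (left_mem_Icc.2 hab) hσ'
  obtain ⟨η, hη, hηact⟩ :=
    exists_isAdmissible_curveAction_le hσ.1 hLσ.continuousOn hLσ.upper z (ξ σ)
  have hrest := hξ.mono hσ' (right_mem_Icc.2 hab)
  rw [hξ.2.2.2] at hrest
  obtain ⟨hcat, hcatact⟩ := hη.concat hrest hσ.1.le hσ.2
  calc fundSol L a b z y ≤ curveAction L a b (concatCurve σ η ξ) :=
        fundSol_le_curveAction hL hab hcat
    _ ≤ _ := by rw [hcatact]; gcongr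

end FundamentalSolution

theorem exists_forall_exists_mem_dist_le {E : Type*} [PseudoMetricSpace E] [ProperSpace E]
    {S : ℝ → Set E} (hS : Monotone S) (hne : ∀ ε > 0, (S ε).Nonempty)
    (hbdd : Bornology.IsBounded (S 1)) : ∃ z, ∀ ε > 0, ∃ p ∈ S ε, dist p z ≤ ε := by
  choose p hp using fun k : ℕ => hne (1 / (k + 1)) Nat.one_div_pos_of_nat
  have hp1 : ∀ k : ℕ, p k ∈ closure (S 1) := fun k =>
    subset_closure (hS (Nat.one_div_le_one_div (Nat.zero_le k) |>.trans_eq (by simp)) (hp k))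
  obtain ⟨z, -, hz⟩ := hbdd.isCompact_closure.exists_mapClusterPt (f := atTop)
    (tendsto_principal.2 (.of_forall hp1))
  refine ⟨z, fun ε hε => ?_⟩
  obtain ⟨k, hkz, hkε⟩ := ((hz.frequently (Metric.ball_mem_nhds z hε)).and_eventually
    (tendsto_one_div_add_atTop_nhds_zero_nat.eventually (Iic_mem_nhds hε))).exists
  exact ⟨p k, hS hkε (hp k), (Metric.mem_ball.1 hkz).le⟩

section LaxOleinik

variable {L : ℝ → Euc n → Euc n → ℝ} {a b c K m ε σ : ℝ} {θ θbar : ℝ → ℝ} {f : Euc n → ℝ}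
  {x y z : Euc n} {ξ : ℝ → Euc n}

theorem add_fundSol_ge (hL : LagrangianBounds L a b c θ θbar) (hab : a < b) (hK : 0 ≤ K)
    (hf : ∀ x y : Euc n, |f x - f y| ≤ K * ‖x - y‖) (w y : Euc n) :
    f y + ‖w - y‖ - (conjFn θ (K + 1) + c) * (b - a) ≤ f w + fundSol L a b w y := by
  have hA := le_fundSol hL hab (by linarith : 0 ≤ K + 1) w y
  have hfw := (le_abs_self _).trans (hf y w)
  rw [norm_sub_rev] at hA hfw
  linarith

theorem norm_sub_le_of_forall_add_fundSol_le (hL : LagrangianBounds L a b c θ θbar)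
    (hab : a < b) (hK : 0 ≤ K) (hf : ∀ x y : Euc n, |f x - f y| ≤ K * ‖x - y‖)
    (hz : ∀ w, f z + fundSol L a b z y ≤ f w + fundSol L a b w y) :
    ‖z - y‖ ≤ (conjFn θ (K + 1) + c + θbar 0) * (b - a) := by
  have hyy := fundSol_le hL hab y y
  rw [sub_self, norm_zero, zero_div] at hyy
  linarith [hz y, add_fundSol_ge hL hab hK hf z y]

theorem add_fundSol_le_of_splice (hL : LagrangianBounds L a b c θ θbar) (hK : 0 ≤ K)
    (hf : ∀ x y : Euc n, |f x - f y| ≤ K * ‖x - y‖) (hξ : IsAdmissible L a b x y ξ)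
    (hσ : σ ∈ Ioc a b) (z : Euc n) :
    f z + fundSol L a b z y + (K + 1) * ‖ξ σ - x‖ ≤ f x + curveAction L a b ξ + K * ‖z - x‖ +
      (θbar (‖ξ σ - z‖ / (σ - a)) + conjFn θ (K + 1) + c) * (σ - a) := by
  have ha : a ∈ Icc a b := left_mem_Icc.2 (hσ.1.le.trans hσ.2)
  have hσ' : σ ∈ Icc a b := Ioc_subset_Icc_self hσ
  have hinit := (hξ.mono ha hσ').curveAction_ge hσ.1.le hL.monotone hL.superlinear
    (hL.mono ha hσ').lower (by linarith : 0 ≤ K + 1)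
  rw [hξ.2.2.1] at hinit
  linarith [fundSol_le_splice hL hξ hσ z, hξ.curveAction_add hσ',
    (le_abs_self _).trans (hf z x)]

theorem norm_sub_le_of_add_curveAction_le (hL : LagrangianBounds L a b c θ θbar) (hK : 0 ≤ K)
    (hf : ∀ x y : Euc n, |f x - f y| ≤ K * ‖x - y‖) (hm : ∀ w, m ≤ f w + fundSol L a b w y)
    (hξ : IsAdmissible L a b x y ξ) (hξm : f x + curveAction L a b ξ ≤ m + ε)
    (hσ : σ ∈ Ioc a b) :
    ‖ξ σ - x‖ ≤ (θbar 0 + conjFn θ (K + 1) + c) * (σ - a) + ε := by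
  have hsplice := add_fundSol_le_of_splice hL hK hf hξ hσ (ξ σ)
  rw [sub_self, norm_zero, zero_div] at hsplice
  linarith [hm (ξ σ)]

theorem add_fundSol_le_of_add_curveAction_le (hL : LagrangianBounds L a b c θ θbar)
    (hθbar : Monotone θbar) (hK : 0 ≤ K) (hf : ∀ x y : Euc n, |f x - f y| ≤ K * ‖x - y‖)
    (hm : ∀ w, m ≤ f w + fundSol L a b w y) (hξ : IsAdmissible L a b x y ξ)
    (hξm : f x + curveAction L a b ξ ≤ m + ε) (hz : ‖z - x‖ ≤ ε) (hε : ε ∈ Ioc 0 (b - a)) :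
    f z + fundSol L a b z y ≤
      m + (1 + K + θbar (θbar 0 + conjFn θ (K + 1) + c + 2) + conjFn θ (K + 1) + c) * ε := by
  have hσ : a + ε ∈ Ioc a b := ⟨by linarith [hε.1], by linarith [hε.2]⟩
  have hdisp := norm_sub_le_of_add_curveAction_le hL hK hf hm hξ hξm hσ
  have hsplice := add_fundSol_le_of_splice hL hK hf hξ hσ z
  rw [add_sub_cancel_left] at hdisp hsplice
  have hspeed : ‖ξ (a + ε) - z‖ / ε ≤ θbar 0 + conjFn θ (K + 1) + c + 2 := by
    rw [div_le_iff₀ hε.1]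
    linarith [norm_sub_le_norm_sub_add_norm_sub (ξ (a + ε)) x z, norm_sub_rev x z]
  nlinarith [mul_le_mul_of_nonneg_right (hθbar hspeed) hε.1.le, mul_le_mul_of_nonneg_left hz hK,
    norm_nonneg (ξ (a + ε) - x)]

theorem exists_forall_add_fundSol_le (hL : LagrangianBounds L a b c θ θbar)
    (hθbar : Monotone θbar) (hK : 0 ≤ K) (hf : ∀ x y : Euc n, |f x - f y| ≤ K * ‖x - y‖)
    (hab : a < b) (y : Euc n) : ∃ z, ∀ w, f z + fundSol L a b z y ≤ f w + fundSol L a b w y := by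
  set h := fun w => f w + fundSol L a b w y
  have hbdd : BddBelow (range h) := ⟨f y - (conjFn θ (K + 1) + c) * (b - a), by
    rintro _ ⟨w, rfl⟩
    linarith [add_fundSol_ge hL hab hK hf w y, norm_nonneg (w - y)]⟩
  set m := ⨅ w, h w
  have hm : ∀ w, m ≤ h w := ciInf_le hbdd
  set S : ℝ → Set (Euc n) := fun e =>
    {x | ∃ ξ, IsAdmissible L a b x y ξ ∧ f x + curveAction L a b ξ ≤ m + e}
  have hne : ∀ e > 0, (S e).Nonempty := fun e he => by
    obtain ⟨x, hx⟩ := exists_lt_of_ciInf_lt (lt_add_of_pos_right m (half_pos he))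
    obtain ⟨ξ, hξ, hact⟩ := exists_curveAction_lt hL hab x y (half_pos he)
    exact ⟨x, ξ, hξ, by linarith [show h x = f x + fundSol L a b x y from rfl]⟩
  have hS1 : S 1 ⊆ Metric.closedBall y (m + 1 - f y + (conjFn θ (K + 1) + c) * (b - a)) := by
    rintro x ⟨ξ, hξ, hx⟩
    rw [Metric.mem_closedBall, dist_eq_norm]
    linarith [add_fundSol_ge hL hab hK hf x y, fundSol_le_curveAction hL hab.le hξ]
  have hSmono : Monotone S := fun _ _ hee' _ ⟨ξ, hξ, hx⟩ => ⟨ξ, hξ, by linarith⟩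
  obtain ⟨z, hz⟩ := exists_forall_exists_mem_dist_le hSmono hne
    (Metric.isBounded_closedBall.subset hS1)
  set C := 1 + K + θbar (θbar 0 + conjFn θ (K + 1) + c + 2) + conjFn θ (K + 1) + c
  refine ⟨z, fun w => le_trans (ge_of_tendsto (x := 𝓝[>] 0) (f := fun ε => m + C * ε) ?_ ?_)
    (hm w)⟩
  · exact ((continuous_const.add (continuous_const_mul C)).tendsto' 0 m (by simp [m])).mono_left
      nhdsWithin_le_nhds
  · filter_upwards [Ioc_mem_nhdsGT (sub_pos.2 hab)] with ε hε
    obtain ⟨x, ⟨ξ, hξ, hx⟩, hxz⟩ := hz ε hε.1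
    exact add_fundSol_le_of_add_curveAction_le hL hθbar hK hf hm hξ hx
      (by rwa [← dist_eq_norm, dist_comm]) hε

theorem laxOleinik_min (hL : LagrangianBounds L a b c θ θbar) (hθbar : Monotone θbar)
    (hK : 0 ≤ K) (hf : ∀ x y : Euc n, |f x - f y| ≤ K * ‖x - y‖) (hab : a < b) (y : Euc n) :
    (∃ z, ∀ w, f z + fundSol L a b z y ≤ f w + fundSol L a b w y) ∧
      ∀ z, (∀ w, f z + fundSol L a b z y ≤ f w + fundSol L a b w y) →
        ‖z - y‖ ≤ (conjFn θ (K + 1) + c + θbar 0) * (b - a) :=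
  ⟨exists_forall_add_fundSol_le hL hθbar hK hf hab y,
    fun _ hz => norm_sub_le_of_forall_add_fundSol_le hL hab hK hf hz⟩

theorem laxOleinik_max (hL : LagrangianBounds L a b c θ θbar) (hθbar : Monotone θbar)
    (hK : 0 ≤ K) (hf : ∀ x y : Euc n, |f x - f y| ≤ K * ‖x - y‖) (hab : a < b) (x : Euc n) :
    (∃ y, ∀ w, f w - fundSol L a b x w ≤ f y - fundSol L a b x y) ∧
      ∀ y, (∀ w, f w - fundSol L a b x w ≤ f y - fundSol L a b x y) →
        ‖y - x‖ ≤ (conjFn θ (K + 1) + c + θbar 0) * (b - a) := by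
  have hf' : ∀ x y : Euc n, |(-f) x - (-f) y| ≤ K * ‖x - y‖ := fun x y => by
    rw [Pi.neg_apply, Pi.neg_apply, neg_sub_neg, abs_sub_comm]
    exact hf x y
  obtain ⟨⟨y, hy⟩, hnorm⟩ := laxOleinik_min hL.timeReversal hθbar hK hf' hab x
  simp only [fundSol_timeReversal hab.le, Pi.neg_apply] at hy hnorm
  exact ⟨⟨y, fun w => by linarith [hy w]⟩, fun y' hy' => hnorm y' fun w => by linarith [hy' w]⟩

end LaxOleinik

theorem stmt1_general {n : ℕ} (L : ℝ → Euc n → Euc n → ℝ) (hL : TonelliTD L)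
    (f : Euc n → ℝ) (K : ℝ) (hK : 0 ≤ K) (hf : ∀ x y : Euc n, |f x - f y| ≤ K * ‖x - y‖)
    (T : ℝ) (cT : ℝ) (θ θbar : ℝ → ℝ)
    (hθmono : Monotone θ) (hθbmono : Monotone θbar)
    (hθsl : Superlinear θ)
    (hbound : ∀ s ∈ Icc (0:ℝ) T, ∀ x v : Euc n, θ ‖v‖ - cT ≤ L s x v ∧ L s x v ≤ θbar ‖v‖) :
    ∀ t1 t2 : ℝ, 0 ≤ t1 → t1 < t2 → t2 ≤ T → ∀ x1 x2 : Euc n,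
      ((∃ z : Euc n, ∀ w : Euc n,
          f z + fundSol L t1 t2 z x2 ≤ f w + fundSol L t1 t2 w x2) ∧
        (∀ z : Euc n,
          (∀ w : Euc n, f z + fundSol L t1 t2 z x2 ≤ f w + fundSol L t1 t2 w x2) →
          ‖z - x2‖ ≤ (conjFn θ (K + 1) + cT + θbar 0) * (t2 - t1))) ∧
      ((∃ y : Euc n, ∀ w : Euc n,
          f w - fundSol L t1 t2 x1 w ≤ f y - fundSol L t1 t2 x1 y) ∧
        (∀ y : Euc n,
          (∀ w : Euc n, f w - fundSol L t1 t2 x1 w ≤ f y - fundSol L t1 t2 x1 y) →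
          ‖y - x1‖ ≤ (conjFn θ (K + 1) + cT + θbar 0) * (t2 - t1))) := by
  intro t1 t2 ht1 h12 h2T x1 x2
  have hsub : Icc t1 t2 ⊆ Icc 0 T := Icc_subset_Icc ht1 h2T
  have hbounds : LagrangianBounds L t1 t2 cT θ θbar :=
    { continuousOn := hL.1.continuousOn.mono (prod_mono (hsub.trans Icc_subset_Ici_self) le_rfl)
      monotone := hθmono
      superlinear := hθsl
      lower := fun s hs x v => (hbound s (hsub hs) x v).1
      upper := fun s hs x v => (hbound s (hsub hs) x v).2 }
  exact ⟨laxOleinik_min hbounds hθbmono hK hf h12 x2, laxOleinik_max hbounds hθbmono hK hf h12 x1⟩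

/-- A priori estimates for the Lax–Oleinik operators `T⁻` and `T⁺`:
minimizers/maximizers exist and stay within distance `λ₁(T,K)·(t₂−t₁)` of the base point,
where `λ₁(T,K) = θ_T*(K+1) + c_T + θ̄_T(0)`. -/
theorem stmt1 {n : ℕ} (L : ℝ → Euc n → Euc n → ℝ) (hL : TonelliTD L)
    (f : Euc n → ℝ) (K : ℝ) (hK : 0 ≤ K) (hf : ∀ x y : Euc n, |f x - f y| ≤ K * ‖x - y‖)
    (T : ℝ) (hT : 0 < T) (cT : ℝ) (hcT : 0 < cT) (θ θbar : ℝ → ℝ)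
    (hθmono : Monotone θ) (hθbmono : Monotone θbar)
    (hθnn : ∀ r : ℝ, 0 ≤ r → 0 ≤ θ r ∧ 0 ≤ θbar r)
    (hθsl : Superlinear θ) (hθbsl : Superlinear θbar)
    (hbound : ∀ s ∈ Icc (0:ℝ) T, ∀ x v : Euc n, θ ‖v‖ - cT ≤ L s x v ∧ L s x v ≤ θbar ‖v‖) :
    ∀ t1 t2 : ℝ, 0 ≤ t1 → t1 < t2 → t2 ≤ T → ∀ x1 x2 : Euc n,
      ((∃ z : Euc n, ∀ w : Euc n,
          f z + fundSol L t1 t2 z x2 ≤ f w + fundSol L t1 t2 w x2) ∧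
        (∀ z : Euc n,
          (∀ w : Euc n, f z + fundSol L t1 t2 z x2 ≤ f w + fundSol L t1 t2 w x2) →
          ‖z - x2‖ ≤ (conjFn θ (K + 1) + cT + θbar 0) * (t2 - t1))) ∧
      ((∃ y : Euc n, ∀ w : Euc n,
          f w - fundSol L t1 t2 x1 w ≤ f y - fundSol L t1 t2 x1 y) ∧
        (∀ y : Euc n,
          (∀ w : Euc n, f w - fundSol L t1 t2 x1 w ≤ f y - fundSol L t1 t2 x1 y) →
          ‖y - x1‖ ≤ (conjFn θ (K + 1) + cT + θbar 0) * (t2 - t1))) :=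
  stmt1_general L hL f K hK hf T cT θ θbar hθmono hθbmono hθsl hbound
end
end

section
/- Let L : ℝⁿ×ℝⁿ → ℝ satisfy (L1')–(L2') and λ > 0. Suppose u : ℝⁿ → ℝ is bounded and satisfies u ≤ T_t⁻u on ℝⁿ for every t > 0. Then u is Lipschitz on ℝⁿ with Lipschitz constant at most θ₂(1) + c₂ + λ·sup_{x∈ℝⁿ}|u(x)|. -/
open MeasureTheory Set Filter Topology intervalIntegral
open scoped RealInnerProductSpace ENNReal NNReal

noncomputable section

/-- Subdifferential `D⁻w(x)`. -/
def subdiff {n : ℕ} (w : Euc n → ℝ) (x : Euc n) : Set (Euc n) :=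
  {p | ∀ ε : ℝ, 0 < ε → ∃ δ > (0:ℝ), ∀ y : Euc n, ‖y - x‖ < δ →
    -(ε * ‖y - x‖) ≤ w y - w x - ⟪p, y - x⟫}

/-- Superdifferential `D⁺w(x)`. -/
def superdiff {n : ℕ} (w : Euc n → ℝ) (x : Euc n) : Set (Euc n) :=
  {p | ∀ ε : ℝ, 0 < ε → ∃ δ > (0:ℝ), ∀ y : Euc n, ‖y - x‖ < δ →
    w y - w x - ⟪p, y - x⟫ ≤ ε * ‖y - x‖}

/-- The Hamiltonian associated with a time-independent Lagrangian:
`H(x,p) = sup_v (⟨p,v⟩ - L(x,v))`. -/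
def HamD {n : ℕ} (L : Euc n → Euc n → ℝ) (x p : Euc n) : ℝ :=
  sSup {r | ∃ v : Euc n, r = ⟪p, v⟫ - L x v}

/-- `v` is a viscosity solution of `λ v(x) + H(x, Dv(x)) = 0` on `ℝⁿ`. -/
def IsViscositySolution {n : ℕ} (lam : ℝ) (H : Euc n → Euc n → ℝ) (v : Euc n → ℝ) : Prop :=
  Continuous v ∧
  (∀ x : Euc n, ∀ p ∈ superdiff v x, lam * v x + H x p ≤ 0) ∧
  (∀ x : Euc n, ∀ p ∈ subdiff v x, 0 ≤ lam * v x + H x p)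

/-- Singular set: points where `v` is not differentiable. -/
def singSet {n : ℕ} (v : Euc n → ℝ) : Set (Euc n) :=
  {x | ¬ DifferentiableAt ℝ v x}

/-- `γ` is a `λ`-calibrated curve for `v` on `[a,b]`. -/
def CalibratedD {n : ℕ} (lam : ℝ) (L : Euc n → Euc n → ℝ) (v : Euc n → ℝ)
    (γ : ℝ → Euc n) (a b : ℝ) : Prop :=
  IsACOn γ a b ∧
    Real.exp (lam * b) * v (γ b) - Real.exp (lam * a) * v (γ a)
      = ∫ τ in a..b, Real.exp (lam * τ) * L (γ τ) (deriv γ τ)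

/-- Cut set of `v`: points at which no backward `λ`-calibrated curve ending there
can be extended beyond. -/
def cutSetD {n : ℕ} (lam : ℝ) (L : Euc n → Euc n → ℝ) (v : Euc n → ℝ) : Set (Euc n) :=
  {x | ¬ ∃ (γ : ℝ → Euc n) (a b b' : ℝ), a < b ∧ b < b' ∧ γ b = x ∧
    CalibratedD lam L v γ a b ∧ CalibratedD lam L v γ a b'}

/-- The Aubry set of `v`: points through which there passes an entire curve
`λ`-calibrated on every compact interval. -/
def aubrySet {n : ℕ} (lam : ℝ) (L : Euc n → Euc n → ℝ) (v : Euc n → ℝ) : Set (Euc n) :=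
  {x | ∃ γ : ℝ → Euc n, γ 0 = x ∧ ∀ a b : ℝ, a < b → CalibratedD lam L v γ a b}

/-- (L1'): `L(x,·)` is strictly convex. -/
def CondL1' {n : ℕ} (L : Euc n → Euc n → ℝ) : Prop :=
  ∀ x : Euc n, StrictConvexOn ℝ univ (L x)

/-- (L2'): two-sided superlinear bounds. -/
def CondL2' {n : ℕ} (L : Euc n → Euc n → ℝ) : Prop :=
  ∃ c₁ c₂ : ℝ, 0 ≤ c₁ ∧ 0 ≤ c₂ ∧ ∃ θ₁ θ₂ : ℝ → ℝ,
    Superlinear θ₁ ∧ Superlinear θ₂ ∧ (∀ r : ℝ, 0 ≤ r → 0 ≤ θ₁ r ∧ 0 ≤ θ₂ r) ∧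
    ∀ x v : Euc n, θ₁ ‖v‖ - c₁ ≤ L x v ∧ L x v ≤ θ₂ ‖v‖ + c₂

/-- `L` is `C²` and satisfies (L1')–(L2'). -/
def TonelliD {n : ℕ} (L : Euc n → Euc n → ℝ) : Prop :=
  ContDiff ℝ 2 (fun q : Euc n × Euc n => L q.1 q.2) ∧ CondL1' L ∧ CondL2' L

/-- The discounted Lax–Oleinik operator `T_t⁻`. -/
def Tminus {n : ℕ} (lam : ℝ) (L : Euc n → Euc n → ℝ) (t : ℝ) (u : Euc n → ℝ)
    (x : Euc n) : ℝ :=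
  sInf {r | ∃ ξ : ℝ → Euc n, IsACOn ξ 0 t ∧ ξ t = x ∧
    IntervalIntegrable (fun s => Real.exp (lam * (s - t)) * L (ξ s) (deriv ξ s)) volume 0 t ∧
    r = Real.exp (-(lam * t)) * u (ξ 0)
        + ∫ s in (0:ℝ)..t, Real.exp (lam * (s - t)) * L (ξ s) (deriv ξ s)}

/-- A bounded function dominated by the Lax–Oleinik semigroup
(`u ≤ T_t⁻u` for all `t > 0`) is Lipschitz, with constant at most
`θ₂(1) + c₂ + λ·sup|u|`. -/
theorem stmt14 {n : ℕ} (L : Euc n → Euc n → ℝ)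
    (hL2 : ContDiff ℝ 2 (fun q : Euc n × Euc n => L q.1 q.2)) (hL1 : CondL1' L)
    (c₁ c₂ : ℝ) (hc₁ : 0 ≤ c₁) (hc₂ : 0 ≤ c₂) (θ₁ θ₂ : ℝ → ℝ)
    (hθ₁ : Superlinear θ₁) (hθ₂ : Superlinear θ₂)
    (hθnn : ∀ r : ℝ, 0 ≤ r → 0 ≤ θ₁ r ∧ 0 ≤ θ₂ r)
    (hbd : ∀ x v : Euc n, θ₁ ‖v‖ - c₁ ≤ L x v ∧ L x v ≤ θ₂ ‖v‖ + c₂)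
    (lam : ℝ) (hlam : 0 < lam) (u : Euc n → ℝ)
    (hb : ∃ M : ℝ, ∀ x : Euc n, |u x| ≤ M)
    (hdom : ∀ t : ℝ, 0 < t → ∀ ξ : ℝ → Euc n, IsACOn ξ 0 t →
      IntervalIntegrable (fun s => Real.exp (lam * (s - t)) * L (ξ s) (deriv ξ s))
        volume 0 t →
      u (ξ t) ≤ Real.exp (-(lam * t)) * u (ξ 0)
        + ∫ s in (0:ℝ)..t, Real.exp (lam * (s - t)) * L (ξ s) (deriv ξ s)) :
    ∀ M : ℝ, (∀ x : Euc n, |u x| ≤ M) →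
      ∀ x y : Euc n, |u x - u y| ≤ (θ₂ 1 + c₂ + lam * M) * ‖x - y‖ := by
  intro M hM x y
  have hK : 0 ≤ θ₂ 1 + c₂ := by have := (hθnn 1 one_pos.le).2; linarith
  have hM0 : 0 ≤ M := le_trans (abs_nonneg _) (hM x)
  have key : ∀ a b : Euc n, a ≠ b → u a - u b ≤ (θ₂ 1 + c₂ + lam * M) * ‖a - b‖ := by
    intro a b hab
    set v : Euc n := a - b with hv
    set t : ℝ := ‖a - b‖ with htdef
    have ht : 0 < t := by simpa [htdef] using sub_ne_zero.mpr hab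
    set ξ : ℝ → Euc n := fun s => b + (s * t⁻¹) • v with hξ
    have hderiv : ∀ s : ℝ, HasDerivAt ξ (t⁻¹ • v) s := by
      intro s
      have h1 : HasDerivAt (fun s : ℝ => s * t⁻¹) t⁻¹ s := by
        simpa using (hasDerivAt_id s).mul_const t⁻¹
      simpa [hξ] using (h1.smul_const v).const_add b
    have hderiv' : deriv ξ = fun _ => t⁻¹ • v := funext fun s => (hderiv s).deriv
    have hAC : IsACOn ξ 0 t := by
      refine ⟨fun _ => t⁻¹ • v, intervalIntegrable_const, ?_, ?_⟩
      · intro τ hτ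
        simp only [hξ, intervalIntegral.integral_const, sub_zero, zero_mul, zero_smul,
          add_zero, smul_smul]
      · exact Filter.Eventually.of_forall fun τ _ => hderiv τ
    have hnorm : ‖t⁻¹ • v‖ = 1 := by
      rw [norm_smul, Real.norm_eq_abs, abs_inv, abs_of_pos ht]
      exact inv_mul_cancel₀ ht.ne'
    have hcont : Continuous fun s => Real.exp (lam * (s - t)) * L (ξ s) (deriv ξ s) := by
      rw [hderiv']
      have hLc : Continuous (fun q : Euc n × Euc n => L q.1 q.2) := hL2.continuous
      fun_prop
    have hInt : IntervalIntegrable (fun s => Real.exp (lam * (s - t)) * L (ξ s) (deriv ξ s))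
        volume 0 t := hcont.intervalIntegrable 0 t
    have hibound : (∫ s in (0:ℝ)..t, Real.exp (lam * (s - t)) * L (ξ s) (deriv ξ s))
        ≤ t * (θ₂ 1 + c₂) := by
      have hle : ∀ s ∈ Icc (0:ℝ) t,
          Real.exp (lam * (s - t)) * L (ξ s) (deriv ξ s) ≤ θ₂ 1 + c₂ := by
        intro s hs
        have hLle : L (ξ s) (deriv ξ s) ≤ θ₂ 1 + c₂ := by
          have := (hbd (ξ s) (t⁻¹ • v)).2
          rw [hnorm] at this
          simpa [hderiv'] using this
        have hexp1 : Real.exp (lam * (s - t)) ≤ 1 := by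
          apply Real.exp_le_one_iff.mpr
          have : s - t ≤ 0 := by linarith [hs.2]
          exact mul_nonpos_of_nonneg_of_nonpos hlam.le this
        calc Real.exp (lam * (s - t)) * L (ξ s) (deriv ξ s)
            ≤ Real.exp (lam * (s - t)) * (θ₂ 1 + c₂) :=
              mul_le_mul_of_nonneg_left hLle (Real.exp_nonneg _)
          _ ≤ 1 * (θ₂ 1 + c₂) := mul_le_mul_of_nonneg_right hexp1 hK
          _ = θ₂ 1 + c₂ := one_mul _
      calc (∫ s in (0:ℝ)..t, Real.exp (lam * (s - t)) * L (ξ s) (deriv ξ s))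
          ≤ ∫ _ in (0:ℝ)..t, (θ₂ 1 + c₂) :=
            intervalIntegral.integral_mono_on ht.le hInt intervalIntegrable_const hle
        _ = t * (θ₂ 1 + c₂) := by simp [mul_add]
    have hmain := hdom t ht ξ hAC hInt
    have hξt : ξ t = a := by
      simp [hξ, mul_inv_cancel₀ ht.ne', hv]
    have hξ0 : ξ 0 = b := by simp [hξ]
    rw [hξt, hξ0] at hmain
    have he2 : 1 - lam * t ≤ Real.exp (-(lam * t)) := by
      have := Real.add_one_le_exp (-(lam * t)); linarith
    have hub1 : -M ≤ u b := neg_le_of_abs_le (hM b)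
    have hub2 : u b ≤ M := le_of_abs_le (hM b)
    have he1 : Real.exp (-(lam * t)) ≤ 1 := by
      apply Real.exp_le_one_iff.mpr
      have : 0 ≤ lam * t := mul_nonneg hlam.le ht.le
      linarith
    nlinarith [mul_nonneg hlam.le ht.le]
  rcases eq_or_ne x y with rfl | hxy
  · have : (0:ℝ) ≤ (θ₂ 1 + c₂ + lam * M) * ‖x - x‖ := by
      apply mul_nonneg _ (norm_nonneg _)
      have := mul_nonneg hlam.le hM0; linarith
    simpa using this
  · rw [abs_sub_le_iff]
    refine ⟨key x y hxy, ?_⟩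
    have := key y x hxy.symm
    rwa [norm_sub_rev] at this
end
end
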